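/- Let g : Ω → Ω be the map defined via M-decompositions and the segment bijection g₀. Then for all x, y ∈ Ω, |g(x) ∧ g(y)| ≥ |x ∧ y| − 2; equivalently, the first k letters of g(x) are determined by the first k+2 letters of x. -/

import Mathlib

/-- The word `τ γ^k`. -/
def tgWord {N : ℕ} (τ γ : Fin N) (k : ℕ) : List (Fin N) :=
  τ :: List.replicate k γ

/-- The word `κ α^k κ γ`. -/
def kakWord {N : ℕ} (κ α γ : Fin N) (k : ℕ) : List (Fin N) :=
  κ :: (List.replicate k α ++ [κ, γ])

/-- `C_M = {τγ^k : k ≥ 2} ∪ {κα^kκγ : k ≥ 0}`. -/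
def CM {N : ℕ} (τ κ α γ : Fin N) : Set (List (Fin N)) :=
  {w | ∃ k, 2 ≤ k ∧ w = tgWord τ γ k} ∪ {w | ∃ k, w = kakWord κ α γ k}

/-- `C_{M'} = {κα^kκγ : k ≥ 0} ∪ {κα^kκγγ : k ≥ 0} ∪ {τγγ}`. -/
def CM' {N : ℕ} (τ κ α γ : Fin N) : Set (List (Fin N)) :=
  {w | ∃ k, w = kakWord κ α γ k} ∪ {w | ∃ k, w = kakWord κ α γ k ++ [γ]} ∪
    {tgWord τ γ 2}

/-- The finite word `w` is a prefix of the infinite sequence `y`. -/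
def PrefOf {N : ℕ} (w : List (Fin N)) (y : ℕ → Fin N) : Prop :=
  ∀ i, ∀ h : i < w.length, w.get ⟨i, h⟩ = y i

/-- The sequence `x` belongs to `Ω = {ω κ^∞ : ω ∈ Σ^*}`: it is eventually
equal to `κ`. -/
def InOmega {N : ℕ} (κ : Fin N) (x : ℕ → Fin N) : Prop :=
  ∃ n, ∀ i, n ≤ i → x i = κ

/-- `X` is the greedy decomposition of the infinite sequence `x` into
segments from `C ∪ Σ`: `x = X₀X₁X₂⋯` where each `X j` is the longest prefix
of the remaining tail belonging to `C ∪ Σ` (single letters count as words of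
length 1). -/
def IsDecompOf {N : ℕ} (C : Set (List (Fin N))) (x : ℕ → Fin N)
    (X : ℕ → List (Fin N)) : Prop :=
  ∀ j,
    PrefOf (X j) (fun i => x ((∑ t ∈ Finset.range j, (X t).length) + i)) ∧
    (X j ∈ C ∨ (X j).length = 1) ∧
    ∀ W : List (Fin N), (W ∈ C ∨ W.length = 1) →
      PrefOf W (fun i => x ((∑ t ∈ Finset.range j, (X t).length) + i)) →
      W.length ≤ (X j).length
open Classical in
/-- The segment map `g₀ : C_M ∪ Σ → C_{M'} ∪ Σ`:
`τγ^k ↦ κα^{k-2}κγ` (`k ≥ 2`), `κα^kκγ ↦ κα^{k-1}κγγ` (`k ≥ 1`),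
`κκγ ↦ τγγ`, and `i ↦ i` for single letters. -/
noncomputable def g0 {N : ℕ} (τ κ α γ : Fin N) (w : List (Fin N)) :
    List (Fin N) :=
  if ∃ k, 2 ≤ k ∧ w = tgWord τ γ k then kakWord κ α γ (w.length - 3)
  else if ∃ k, 1 ≤ k ∧ w = kakWord κ α γ k then
    kakWord κ α γ (w.length - 4) ++ [γ]
  else if w = kakWord κ α γ 0 then tgWord τ γ 2
  else w

/-- `u` is the concatenation of the (nonempty) words `X 0, X 1, X 2, ⋯`. -/
def ConcatEq {N : ℕ} (X : ℕ → List (Fin N)) (u : ℕ → Fin N) : Prop :=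
  ∀ j, PrefOf (X j) (fun i => u ((∑ t ∈ Finset.range j, (X t).length) + i))


/-!
Compare the two greedy decompositions segment by segment. While the segments coincide, so do
their images under `g₀`, and we pass to the tails. At the first segment where they differ,
greedy maximality forces the longer one to reach beyond the common prefix of length `k + 2`, so it
is `τγ^K` or `κα^Kκγ` with `K ≥ k`. In either case both images start with `κα^(k-1)`: when the
shorter segment is the single letter `κ`, the following `α`s are single-letter segments, because
no word of `C_M` begins with `αα`.
-/

section Words

variable {N : ℕ} {τ κ α γ : Fin N}

@[simp]
theorem tgWord_length (k : ℕ) : (tgWord τ γ k).length = k + 1 := by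
  simp [tgWord]

@[simp]
theorem kakWord_length (k : ℕ) : (kakWord κ α γ k).length = k + 3 := by
  simp [kakWord]

theorem tgWord_getElem {k i : ℕ} (hi : i < (tgWord τ γ k).length) :
    (tgWord τ γ k)[i] = if i = 0 then τ else γ := by
  cases i <;> simp [tgWord]

theorem kakWord_getElem_of_le {k i : ℕ} (hi : i ≤ k) :
    (kakWord κ α γ k)[i]'(by simp; omega) = if i = 0 then κ else α := by
  cases i with
  | zero => simp [kakWord]
  | succ i =>
    simp only [kakWord, List.getElem_cons_succ]
    rw [List.getElem_append_left (by simp; omega)]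
    simp

theorem kakWord_getElem_succ (k : ℕ) : (kakWord κ α γ k)[k + 1]'(by simp) = κ := by
  simp [kakWord]

theorem nil_not_mem_CM : [] ∉ CM τ κ α γ := by
  rintro (⟨k, -, h⟩ | ⟨k, h⟩) <;> simp [tgWord, kakWord] at h

theorem g0_length (w : List (Fin N)) : (g0 τ κ α γ w).length = w.length := by
  unfold g0
  split_ifs with htg hkak hkak0
  · obtain ⟨k, hk, rfl⟩ := htg
    simp; omega
  · obtain ⟨k, hk, rfl⟩ := hkak
    simp; omega
  · simp [hkak0]
  · rfl

theorem g0_tgWord {k : ℕ} (hk : 2 ≤ k) :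
    g0 τ κ α γ (tgWord τ γ k) = kakWord κ α γ (k - 2) := by
  rw [g0, if_pos ⟨k, hk, rfl⟩, tgWord_length]
  rfl

theorem g0_kakWord (h1 : τ ≠ κ) {k : ℕ} (hk : 1 ≤ k) :
    g0 τ κ α γ (kakWord κ α γ k) = kakWord κ α γ (k - 1) ++ [γ] := by
  have hne : ¬ ∃ k', 2 ≤ k' ∧ kakWord κ α γ k = tgWord τ γ k' := by
    rintro ⟨k', -, h⟩
    simp [kakWord, tgWord, h1.symm] at h
  rw [g0, if_neg hne, if_pos ⟨k, hk, rfl⟩, kakWord_length]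
  rfl

theorem g0_singleton (c : Fin N) : g0 τ κ α γ [c] = [c] := by
  have hlen : ∀ w : List (Fin N), 1 < w.length → [c] ≠ w := fun w hw h => by
    simp [← h] at hw
  rw [g0, if_neg, if_neg, if_neg (hlen _ (by simp))]
  · rintro ⟨k, -, h⟩
    exact hlen _ (by simp) h
  · rintro ⟨k, hk, h⟩
    exact hlen _ (by simp; omega) h

end Words

section Decompositions

variable {N : ℕ} {w w' : List (Fin N)} {x y u : ℕ → Fin N} {X : ℕ → List (Fin N)}
  {C : Set (List (Fin N))}

theorem PrefOf.getElem (h : PrefOf w x) {i : ℕ} (hi : i < w.length) : x i = w[i] :=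
  (h i hi).symm

theorem PrefOf.head_eq {c : Fin N} (h : PrefOf (c :: w) x) : x 0 = c :=
  (h 0 (Nat.succ_pos _)).symm

theorem PrefOf.congr (h : PrefOf w x) (hxy : ∀ i < w.length, x i = y i) : PrefOf w y :=
  fun i hi => (h i hi).trans (hxy i hi)

theorem PrefOf.eq_of_length_eq (h : PrefOf w x) (h' : PrefOf w' x)
    (hlen : w.length = w'.length) : w = w' :=
  List.ext_getElem hlen fun _ hi hi' => (h.getElem hi).symm.trans (h'.getElem hi')

theorem sum_range_succ_length (j : ℕ) :
    ∑ t ∈ Finset.range (j + 1), (X t).length =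
      (X 0).length + ∑ t ∈ Finset.range j, (X (t + 1)).length := by
  rw [Finset.sum_range_succ', add_comm]

theorem ConcatEq.prefOf_head (hu : ConcatEq X u) : PrefOf (X 0) u := by
  simpa using hu 0

theorem ConcatEq.tail (hu : ConcatEq X u) :
    ConcatEq (fun t => X (t + 1)) (fun i => u ((X 0).length + i)) := by
  intro j
  have h := hu (j + 1)
  rw [sum_range_succ_length] at h
  simpa only [add_assoc] using h

theorem IsDecompOf.concatEq (hX : IsDecompOf C x X) : ConcatEq X x :=
  fun j => (hX j).1

theorem IsDecompOf.head_mem (hX : IsDecompOf C x X) : X 0 ∈ C ∨ (X 0).length = 1 :=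
  (hX 0).2.1

theorem IsDecompOf.length_le_head (hX : IsDecompOf C x X) (hw : w ∈ C ∨ w.length = 1)
    (hwx : PrefOf w x) : w.length ≤ (X 0).length :=
  (hX 0).2.2 w hw (by simpa using hwx)

theorem IsDecompOf.length_head_pos (hC : [] ∉ C) (hX : IsDecompOf C x X) :
    0 < (X 0).length := by
  rcases hX.head_mem with h | h
  · exact List.length_pos_iff.mpr (ne_of_mem_of_not_mem h hC)
  · omega

theorem IsDecompOf.head_mem_of_one_lt (hX : IsDecompOf C x X) (h : 1 < (X 0).length) :
    X 0 ∈ C :=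
  hX.head_mem.resolve_right h.ne'

theorem IsDecompOf.tail (hX : IsDecompOf C x X) :
    IsDecompOf C (fun i => x ((X 0).length + i)) (fun t => X (t + 1)) := by
  intro j
  have h := hX (j + 1)
  rw [sum_range_succ_length] at h
  simpa only [add_assoc] using h

theorem IsDecompOf.lt_length_of_head_ne {Y : ℕ → List (Fin N)} (hX : IsDecompOf C x X)
    (hY : IsDecompOf C y Y) {n : ℕ} (hxy : ∀ i < n, x i = y i) (hne : X 0 ≠ Y 0)
    (hlen : (X 0).length ≤ (Y 0).length) : n < (Y 0).length := by
  by_contra! hn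
  have hYx : PrefOf (Y 0) x :=
    hY.concatEq.prefOf_head.congr fun i hi => (hxy i (by omega)).symm
  have hle := hX.length_le_head hY.head_mem hYx
  exact hne (hX.concatEq.prefOf_head.eq_of_length_eq hYx (by omega))

end Decompositions

section SegmentMap

variable {N : ℕ} {τ κ α γ : Fin N} {x y u v : ℕ → Fin N} {X Y : ℕ → List (Fin N)}

theorem head_eq_singleton_of_alpha_alpha (h3 : κ ≠ α) (h5 : α ≠ γ)
    (hX : IsDecompOf (CM τ κ α γ) x X) (hx0 : x 0 = α) (hx1 : x 1 = α) : X 0 = [α] := by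
  have hpre := hX.concatEq.prefOf_head
  rcases hX.head_mem with (⟨k, hk, hX0⟩ | ⟨k, hX0⟩) | hX0
  · have h := hpre.getElem (i := 1) (by simp [hX0]; omega)
    simp only [hX0, tgWord_getElem, one_ne_zero, if_false] at h
    exact absurd (hx1.symm.trans h) h5
  · have h := hpre.getElem (i := 0) (by simp [hX0])
    simp only [hX0, kakWord_getElem_of_le (Nat.zero_le k), if_true] at h
    exact absurd (h.symm.trans hx0) h3
  · obtain ⟨c, hc⟩ := List.length_eq_one_iff.mp hX0
    have h := hpre.getElem (i := 0) (by simp [hc])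
    simp only [hc, List.getElem_cons_zero] at h
    rw [hc, ← h, hx0]

theorem apply_zero_of_head_singleton (hu : ConcatEq (fun j => g0 τ κ α γ (X j)) u) {c : Fin N}
    (hX0 : X 0 = [c]) : u 0 = c := by
  have h : PrefOf [c] u := by simpa [hX0, g0_singleton] using hu.prefOf_head
  exact h.head_eq

theorem eq_alpha_of_alpha_run (h3 : κ ≠ α) (h5 : α ≠ γ) (n : ℕ)
    (hX : IsDecompOf (CM τ κ α γ) x X) (hu : ConcatEq (fun j => g0 τ κ α γ (X j)) u)
    (hx : ∀ i ≤ n, x i = α) : ∀ i < n, u i = α := by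
  induction n generalizing x X u with
  | zero => simp
  | succ n ih =>
    have hX0 := head_eq_singleton_of_alpha_alpha h3 h5 hX (hx 0 (by omega)) (hx 1 (by omega))
    have htail := ih hX.tail hu.tail
      (fun i hi => by simpa [hX0, add_comm] using hx (i + 1) (by omega))
    rintro (_ | i) hi
    · exact apply_zero_of_head_singleton hu hX0
    · simpa [hX0, g0_singleton, add_comm] using htail i (by omega)

theorem eq_kappa_alpha_of_head_tgWord (hu : ConcatEq (fun j => g0 τ κ α γ (X j)) u)
    {K : ℕ} (hK : 2 ≤ K) (hX0 : X 0 = tgWord τ γ K) :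
    ∀ i, i + 2 ≤ K → u i = if i = 0 then κ else α := by
  intro i hi
  have hpre : PrefOf (kakWord κ α γ (K - 2)) u := by
    simpa [hX0, g0_tgWord hK] using hu.prefOf_head
  rw [hpre.getElem (by simp; omega), kakWord_getElem_of_le (by omega)]

theorem eq_kappa_alpha_of_head_kakWord (h1 : τ ≠ κ)
    (hu : ConcatEq (fun j => g0 τ κ α γ (X j)) u) {K : ℕ} (hX0 : X 0 = kakWord κ α γ K) :
    ∀ i < K, u i = if i = 0 then κ else α := by
  intro i hi
  have hpre : PrefOf (kakWord κ α γ (K - 1) ++ [γ]) u := by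
    simpa [hX0, g0_kakWord h1 (by omega : 1 ≤ K)] using hu.prefOf_head
  rw [hpre.getElem (by simp; omega), List.getElem_append_left (by simp; omega),
    kakWord_getElem_of_le (by omega)]

theorem eq_kappa_alpha_of_head_singleton (h3 : κ ≠ α) (h5 : α ≠ γ)
    (hX : IsDecompOf (CM τ κ α γ) x X) (hu : ConcatEq (fun j => g0 τ κ α γ (X j)) u)
    (hX0 : X 0 = [κ]) {n : ℕ} (hx : ∀ i, 1 ≤ i → i ≤ n → x i = α) :
    ∀ i < n, u i = if i = 0 then κ else α := by
  obtain _ | n := n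
  · simp
  have htail := eq_alpha_of_alpha_run h3 h5 n hX.tail hu.tail
    (fun i hi => by simpa [hX0, add_comm] using hx (i + 1) (by omega) (by omega))
  rintro (_ | i) hi
  · simpa using apply_zero_of_head_singleton hu hX0
  · simpa [hX0, g0_singleton, add_comm] using htail i (by omega)

theorem agree_of_head_tgWord (h1 : τ ≠ κ)
    (hX : IsDecompOf (CM τ κ α γ) x X) (hY : IsDecompOf (CM τ κ α γ) y Y)
    (hu : ConcatEq (fun j => g0 τ κ α γ (X j)) u) (hv : ConcatEq (fun j => g0 τ κ α γ (Y j)) v)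
    {k K : ℕ} (hxy : ∀ i < k + 2, x i = y i) (hK : k + 2 ≤ K) (hY0 : Y 0 = tgWord τ γ K) :
    ∀ i < k, u i = v i := by
  rcases k.eq_zero_or_pos with rfl | hk
  · simp
  have hy : PrefOf (tgWord τ γ K) y := hY0 ▸ hY.concatEq.prefOf_head
  have hx : PrefOf (tgWord τ γ (k + 1)) x := fun i hi => by
    simp only [tgWord_length] at hi
    rw [hxy i hi, hy.getElem (by simp; omega)]
    simp [tgWord_getElem]
  have hXlen := hX.length_le_head (Or.inl (Or.inl ⟨k + 1, by omega, rfl⟩)) hx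
  obtain ⟨k0, hk0, hX0⟩ : ∃ k0, 2 ≤ k0 ∧ X 0 = tgWord τ γ k0 := by
    rcases hX.head_mem_of_one_lt (by simp at hXlen; omega) with h | ⟨k0, hX0⟩
    · exact h
    · have hκ : PrefOf (kakWord κ α γ k0) x := hX0 ▸ hX.concatEq.prefOf_head
      exact absurd (hx.head_eq.symm.trans hκ.head_eq) h1
  simp only [hX0, tgWord_length] at hXlen
  intro i hi
  rw [eq_kappa_alpha_of_head_tgWord hu hk0 hX0 i (by omega),
    eq_kappa_alpha_of_head_tgWord hv (by omega) hY0 i (by omega)]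

theorem agree_of_head_kakWord (h1 : τ ≠ κ) (h3 : κ ≠ α) (h5 : α ≠ γ)
    (hX : IsDecompOf (CM τ κ α γ) x X) (hY : IsDecompOf (CM τ κ α γ) y Y)
    (hu : ConcatEq (fun j => g0 τ κ α γ (X j)) u) (hv : ConcatEq (fun j => g0 τ κ α γ (Y j)) v)
    {k K : ℕ} (hxy : ∀ i < k + 2, x i = y i) (hK : k ≤ K) (hY0 : Y 0 = kakWord κ α γ K)
    (hne : X 0 ≠ Y 0) (hlen : (X 0).length ≤ (Y 0).length) :
    ∀ i < k, u i = v i := by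
  have hx := hX.concatEq.prefOf_head
  have hy : PrefOf (kakWord κ α γ K) y := hY0 ▸ hY.concatEq.prefOf_head
  have hx0 : x 0 = κ := (hxy 0 (by omega)).trans hy.head_eq
  have hxα : ∀ i, 1 ≤ i → i ≤ K → i < k + 2 → x i = α := fun i hi1 hiK hik => by
    rw [hxy i hik, hy.getElem (by simp; omega), kakWord_getElem_of_le hiK, if_neg (by omega)]
  suffices hu' : ∀ i < k, u i = if i = 0 then κ else α by
    intro i hi
    rw [hu' i hi, eq_kappa_alpha_of_head_kakWord h1 hv hY0 i (by omega)]
  rcases hX.head_mem with (⟨k0, -, hX0⟩ | ⟨k0, hX0⟩) | hX0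
  · exact absurd (hx0.symm.trans (hX0 ▸ hx : PrefOf (tgWord τ γ k0) x).head_eq) h1.symm
  · have hk0K : k0 < K := by
      simp only [hX0, hY0, kakWord_length] at hlen
      exact lt_of_le_of_ne (by omega) fun h => hne (by rw [hX0, hY0, h])
    -- after `κ α^k0`, `x` has `κ` where `y` still has `α`
    have hkk0 : k ≤ k0 := by
      by_contra! hk0k
      have hκ := (hX0 ▸ hx : PrefOf (kakWord κ α γ k0) x).getElem (i := k0 + 1) (by simp)
      rw [kakWord_getElem_succ, hxα (k0 + 1) (by omega) (by omega) (by omega)] at hκ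
      exact h3 hκ.symm
    exact fun i hi => eq_kappa_alpha_of_head_kakWord h1 hu hX0 i (by omega)
  · obtain ⟨c, hc⟩ := List.length_eq_one_iff.mp hX0
    have hcκ : c = κ := (hc ▸ hx : PrefOf [c] x).head_eq.symm.trans hx0
    exact eq_kappa_alpha_of_head_singleton h3 h5 hX hu (hcκ ▸ hc)
      fun i hi1 hik => hxα i hi1 (by omega) (by omega)

theorem agree_of_head_ne (h1 : τ ≠ κ) (h3 : κ ≠ α) (h5 : α ≠ γ)
    (hX : IsDecompOf (CM τ κ α γ) x X) (hY : IsDecompOf (CM τ κ α γ) y Y)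
    (hu : ConcatEq (fun j => g0 τ κ α γ (X j)) u) (hv : ConcatEq (fun j => g0 τ κ α γ (Y j)) v)
    {k : ℕ} (hxy : ∀ i < k + 2, x i = y i) (hne : X 0 ≠ Y 0) :
    ∀ i < k, u i = v i := by
  wlog hlen : (X 0).length ≤ (Y 0).length generalizing x y u v X Y
  · intro i hi
    exact (this hY hX hv hu (fun i hi => (hxy i hi).symm) hne.symm (by omega) i hi).symm
  have hlong := hX.lt_length_of_head_ne hY hxy hne hlen
  rcases hY.head_mem_of_one_lt (by omega) with ⟨K, -, hY0⟩ | ⟨K, hY0⟩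
  · exact agree_of_head_tgWord h1 hX hY hu hv hxy (by simp [hY0] at hlong; omega) hY0
  · exact agree_of_head_kakWord h1 h3 h5 hX hY hu hv hxy (by simp [hY0] at hlong; omega) hY0
      hne hlen

theorem agree_of_agree_add_two (h1 : τ ≠ κ) (h3 : κ ≠ α) (h5 : α ≠ γ) (k : ℕ)
    (hX : IsDecompOf (CM τ κ α γ) x X) (hY : IsDecompOf (CM τ κ α γ) y Y)
    (hu : ConcatEq (fun j => g0 τ κ α γ (X j)) u) (hv : ConcatEq (fun j => g0 τ κ α γ (Y j)) v)
    (hxy : ∀ i < k + 2, x i = y i) : ∀ i < k, u i = v i := by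
  induction k using Nat.strong_induction_on generalizing x y X Y u v with
  | _ k ih =>
  by_cases hne : X 0 = Y 0
  swap
  · exact agree_of_head_ne h1 h3 h5 hX hY hu hv hxy hne
  have hm := hX.length_head_pos nil_not_mem_CM
  intro i hi
  by_cases him : i < (X 0).length
  · rw [hu.prefOf_head.getElem (by simpa [g0_length]),
      hv.prefOf_head.getElem (by simpa [g0_length, ← hne])]
    simp only [hne]
  · have htail := ih (k - (X 0).length) (by omega) hX.tail hY.tail hu.tail hv.tail
      (fun i hi => by simpa [hne] using hxy ((X 0).length + i) (by omega))
      (i - (X 0).length) (by omega)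
    simpa [g0_length, ← hne, Nat.add_sub_cancel' (not_lt.mp him)] using htail

end SegmentMap

theorem stmt16_general {N : ℕ} (τ κ α γ : Fin N)
    (h1 : τ ≠ κ) (h3 : κ ≠ α) (h5 : α ≠ γ)
    (x y : ℕ → Fin N)
    (X Y : ℕ → List (Fin N))
    (hX : IsDecompOf (CM τ κ α γ) x X) (hY : IsDecompOf (CM τ κ α γ) y Y)
    (u v : ℕ → Fin N)
    (hu : ConcatEq (fun j => g0 τ κ α γ (X j)) u)
    (hv : ConcatEq (fun j => g0 τ κ α γ (Y j)) v) :
    ∀ k : ℕ, (∀ i < k + 2, x i = y i) → ∀ i < k, u i = v i :=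
  fun k => agree_of_agree_add_two h1 h3 h5 k hX hY hu hv

/-- `|g(x) ∧ g(y)| ≥ |x ∧ y| − 2`: the first `k` letters of
`g(x)` are determined by the first `k + 2` letters of `x`. -/
theorem stmt16 {N : ℕ} (hN : 4 ≤ N) (τ κ α γ : Fin N)
    (h1 : τ ≠ κ) (h2 : τ ≠ γ) (h3 : κ ≠ α) (h4 : κ ≠ γ) (h5 : α ≠ γ)
    (x y : ℕ → Fin N) (hx : InOmega κ x) (hy : InOmega κ y)
    (X Y : ℕ → List (Fin N))
    (hX : IsDecompOf (CM τ κ α γ) x X) (hY : IsDecompOf (CM τ κ α γ) y Y)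
    (u v : ℕ → Fin N)
    (hu : ConcatEq (fun j => g0 τ κ α γ (X j)) u)
    (hv : ConcatEq (fun j => g0 τ κ α γ (Y j)) v) :
    ∀ k : ℕ, (∀ i < k + 2, x i = y i) → ∀ i < k, u i = v i :=
  stmt16_general τ κ α γ h1 h3 h5 x y X Y hX hY u v hu hv
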